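/- For all positive integers a and b, the set S₇ = {0, a+b, 2a+b, 3a+b, 3a+2b, 4a+2b} satisfies |S₇+S₇| ≤ |S₇-S₇| (i.e., S₇ is not sum-dominant). -/
import Mathlib


open Finset
open scoped Pointwise

lemma aux (S : Finset ℤ) (L D : List ℤ) (hL : S + S ⊆ L.toFinset)
    (hD : D.toFinset ⊆ S - S) (hnd : D.Nodup) (hlen : L.length ≤ D.length) :
    (S + S).card ≤ (S - S).card :=
  calc (S + S).card ≤ L.toFinset.card := Finset.card_le_card hL
    _ ≤ L.length := L.toFinset_card_le
    _ ≤ D.length := hlen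
    _ = D.toFinset.card := (List.toFinset_card_of_nodup hnd).symm
    _ ≤ (S - S).card := Finset.card_le_card hD

set_option maxHeartbeats 1600000 in
theorem stmt_11 (a b : ℤ) (ha : 0 < a) (hb : 0 < b) :
    ((({0, a+b, 2*a+b, 3*a+b, 3*a+2*b, 4*a+2*b} : Finset ℤ)) + {0, a+b, 2*a+b, 3*a+b, 3*a+2*b, 4*a+2*b}).card ≤ ((({0, a+b, 2*a+b, 3*a+b, 3*a+2*b, 4*a+2*b} : Finset ℤ)) - {0, a+b, 2*a+b, 3*a+b, 3*a+2*b, 4*a+2*b}).card := by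
  rcases eq_or_ne b a with rfl | hab
  · -- case b = a
    apply aux _ [0, 2*b, 3*b, 4*b, 5*b, 6*b, 7*b, 8*b, 9*b, 10*b, 11*b, 12*b] [-6*b, -5*b, -4*b, -3*b, -2*b, -b, 0, b, 2*b, 3*b, 4*b, 5*b, 6*b]
    · intro x hx
      rw [Finset.mem_add] at hx
      obtain ⟨y, hy, z, hz, rfl⟩ := hx
      simp only [Finset.mem_insert, Finset.mem_singleton] at hy hz
      simp only [List.mem_toFinset, List.mem_cons, List.not_mem_nil, or_false]
      omega
    · intro x hx
      simp only [List.mem_toFinset, List.mem_cons, List.not_mem_nil, or_false] at hx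
      rcases hx with h | h | h | h | h | h | h | h | h | h | h | h | h
      · rw [h]; exact Finset.mem_sub.mpr ⟨(0:ℤ), by simp, 4*b+2*b, by simp, by ring⟩
      · rw [h]; exact Finset.mem_sub.mpr ⟨(0:ℤ), by simp, 3*b+2*b, by simp, by ring⟩
      · rw [h]; exact Finset.mem_sub.mpr ⟨(0:ℤ), by simp, 3*b+b, by simp, by ring⟩
      · rw [h]; exact Finset.mem_sub.mpr ⟨(0:ℤ), by simp, 2*b+b, by simp, by ring⟩
      · rw [h]; exact Finset.mem_sub.mpr ⟨(0:ℤ), by simp, b+b, by simp, by ring⟩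
      · rw [h]; exact Finset.mem_sub.mpr ⟨b+b, by simp, 2*b+b, by simp, by ring⟩
      · rw [h]; exact Finset.mem_sub.mpr ⟨(0:ℤ), by simp, (0:ℤ), by simp, by ring⟩
      · rw [h]; exact Finset.mem_sub.mpr ⟨2*b+b, by simp, b+b, by simp, by ring⟩
      · rw [h]; exact Finset.mem_sub.mpr ⟨b+b, by simp, (0:ℤ), by simp, by ring⟩
      · rw [h]; exact Finset.mem_sub.mpr ⟨2*b+b, by simp, (0:ℤ), by simp, by ring⟩
      · rw [h]; exact Finset.mem_sub.mpr ⟨3*b+b, by simp, (0:ℤ), by simp, by ring⟩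
      · rw [h]; exact Finset.mem_sub.mpr ⟨3*b+2*b, by simp, (0:ℤ), by simp, by ring⟩
      · rw [h]; exact Finset.mem_sub.mpr ⟨4*b+2*b, by simp, (0:ℤ), by simp, by ring⟩
    · simp only [List.nodup_cons, List.mem_cons, List.not_mem_nil, List.nodup_nil, or_false, not_false_eq_true,
        not_or, and_true]
      omega
    · simp
  · rcases eq_or_ne b (2*a) with h2 | h2
    · subst h2
      apply aux _ [0, 3*a, 4*a, 5*a, 6*a, 7*a, 8*a, 9*a, 10*a, 11*a, 12*a, 13*a, 14*a, 15*a, 16*a] [-8*a, -7*a, -5*a, -4*a, -3*a, -2*a, -a, 0, a, 2*a, 3*a, 4*a, 5*a, 7*a, 8*a]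
      · intro x hx
        rw [Finset.mem_add] at hx
        obtain ⟨y, hy, z, hz, rfl⟩ := hx
        simp only [Finset.mem_insert, Finset.mem_singleton] at hy hz
        simp only [List.mem_toFinset, List.mem_cons, List.not_mem_nil, or_false]
        omega
      · intro x hx
        simp only [List.mem_toFinset, List.mem_cons, List.not_mem_nil, or_false] at hx
        rcases hx with h | h | h | h | h | h | h | h | h | h | h | h | h | h | h
        · rw [h]; exact Finset.mem_sub.mpr ⟨(0:ℤ), by simp, 4*a+2*(2*a), by simp, by ring⟩
        · rw [h]; exact Finset.mem_sub.mpr ⟨(0:ℤ), by simp, 3*a+2*(2*a), by simp, by ring⟩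
        · rw [h]; exact Finset.mem_sub.mpr ⟨(0:ℤ), by simp, 3*a+2*a, by simp, by ring⟩
        · rw [h]; exact Finset.mem_sub.mpr ⟨(0:ℤ), by simp, 2*a+2*a, by simp, by ring⟩
        · rw [h]; exact Finset.mem_sub.mpr ⟨(0:ℤ), by simp, a+2*a, by simp, by ring⟩
        · rw [h]; exact Finset.mem_sub.mpr ⟨a+2*a, by simp, 3*a+2*a, by simp, by ring⟩
        · rw [h]; exact Finset.mem_sub.mpr ⟨a+2*a, by simp, 2*a+2*a, by simp, by ring⟩
        · rw [h]; exact Finset.mem_sub.mpr ⟨(0:ℤ), by simp, (0:ℤ), by simp, by ring⟩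
        · rw [h]; exact Finset.mem_sub.mpr ⟨2*a+2*a, by simp, a+2*a, by simp, by ring⟩
        · rw [h]; exact Finset.mem_sub.mpr ⟨3*a+2*a, by simp, a+2*a, by simp, by ring⟩
        · rw [h]; exact Finset.mem_sub.mpr ⟨a+2*a, by simp, (0:ℤ), by simp, by ring⟩
        · rw [h]; exact Finset.mem_sub.mpr ⟨2*a+2*a, by simp, (0:ℤ), by simp, by ring⟩
        · rw [h]; exact Finset.mem_sub.mpr ⟨3*a+2*a, by simp, (0:ℤ), by simp, by ring⟩
        · rw [h]; exact Finset.mem_sub.mpr ⟨3*a+2*(2*a), by simp, (0:ℤ), by simp, by ring⟩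
        · rw [h]; exact Finset.mem_sub.mpr ⟨4*a+2*(2*a), by simp, (0:ℤ), by simp, by ring⟩
      · simp only [List.nodup_cons, List.mem_cons, List.not_mem_nil, List.nodup_nil, or_false, not_false_eq_true,
          not_or, and_true]
        omega
      · simp
    · -- generic case
      apply aux _ [(0:ℤ), a+b, 2*a+b, 2*a+2*b, 3*a+b, 3*a+2*b, 4*a+2*b, 4*a+3*b, 5*a+2*b, 5*a+3*b, 6*a+2*b, 6*a+3*b, 6*a+4*b, 7*a+3*b, 7*a+4*b, 8*a+4*b] [-4*a-2*b, -3*a-2*b, -3*a-b, -2*a-b, -2*a, -a-b, -a, -b, (0:ℤ), b, a, a+b, 2*a, 2*a+b, 3*a+b, 3*a+2*b, 4*a+2*b]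
      · intro x hx
        rw [Finset.mem_add] at hx
        obtain ⟨y, hy, z, hz, rfl⟩ := hx
        simp only [Finset.mem_insert, Finset.mem_singleton] at hy hz
        simp only [List.mem_toFinset, List.mem_cons, List.not_mem_nil, or_false]
        omega
      · intro x hx
        simp only [List.mem_toFinset, List.mem_cons, List.not_mem_nil, or_false] at hx
        rcases hx with h | h | h | h | h | h | h | h | h | h | h | h | h | h | h | h | h
        · rw [h]; exact Finset.mem_sub.mpr ⟨(0:ℤ), by simp, 4*a+2*b, by simp, by ring⟩
        · rw [h]; exact Finset.mem_sub.mpr ⟨(0:ℤ), by simp, 3*a+2*b, by simp, by ring⟩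
        · rw [h]; exact Finset.mem_sub.mpr ⟨(0:ℤ), by simp, 3*a+b, by simp, by ring⟩
        · rw [h]; exact Finset.mem_sub.mpr ⟨(0:ℤ), by simp, 2*a+b, by simp, by ring⟩
        · rw [h]; exact Finset.mem_sub.mpr ⟨a+b, by simp, 3*a+b, by simp, by ring⟩
        · rw [h]; exact Finset.mem_sub.mpr ⟨(0:ℤ), by simp, a+b, by simp, by ring⟩
        · rw [h]; exact Finset.mem_sub.mpr ⟨2*a+b, by simp, 3*a+b, by simp, by ring⟩
        · rw [h]; exact Finset.mem_sub.mpr ⟨3*a+b, by simp, 3*a+2*b, by simp, by ring⟩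
        · rw [h]; exact Finset.mem_sub.mpr ⟨(0:ℤ), by simp, (0:ℤ), by simp, by ring⟩
        · rw [h]; exact Finset.mem_sub.mpr ⟨3*a+2*b, by simp, 3*a+b, by simp, by ring⟩
        · rw [h]; exact Finset.mem_sub.mpr ⟨3*a+b, by simp, 2*a+b, by simp, by ring⟩
        · rw [h]; exact Finset.mem_sub.mpr ⟨a+b, by simp, (0:ℤ), by simp, by ring⟩
        · rw [h]; exact Finset.mem_sub.mpr ⟨3*a+b, by simp, a+b, by simp, by ring⟩
        · rw [h]; exact Finset.mem_sub.mpr ⟨2*a+b, by simp, (0:ℤ), by simp, by ring⟩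
        · rw [h]; exact Finset.mem_sub.mpr ⟨3*a+b, by simp, (0:ℤ), by simp, by ring⟩
        · rw [h]; exact Finset.mem_sub.mpr ⟨3*a+2*b, by simp, (0:ℤ), by simp, by ring⟩
        · rw [h]; exact Finset.mem_sub.mpr ⟨4*a+2*b, by simp, (0:ℤ), by simp, by ring⟩
      · simp only [List.nodup_cons, List.mem_cons, List.not_mem_nil, List.nodup_nil, or_false, not_false_eq_true,
          not_or, and_true]
        omega
      · simp
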